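/- arXiv:2110.13768 — 7 statements merged into one kernel-verified Lean document; each statement's English description precedes it below -/
import Mathlib

section
/- Let ω be the bilinear form on ℂ⁴ given by ω(u,v) = u₁v₂ − u₂v₁ + u₃v₄ − u₄v₃, and let L : ℂ⁴ → ℂ⁴ be the linear map L(X,Y,A,B) = (−X−A, −Y, A, B−Y). Then L is a symplectic involution: L∘L = id and ω(Lu, Lv) = ω(u,v) for all u,v ∈ ℂ⁴. -/
/-- The standard complex symplectic bilinear form on `ℂ⁴`:
`ω(u,v) = u₁v₂ − u₂v₁ + u₃v₄ − u₄v₃`. -/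
noncomputable def omega4 (u v : Fin 4 → ℂ) : ℂ :=
  u 0 * v 1 - u 1 * v 0 + u 2 * v 3 - u 3 * v 2

/-- The Weyl symmetry in logarithmic coordinates:
`L(X,Y,A,B) = (−X−A, −Y, A, B−Y)`. -/
def weylL (v : Fin 4 → ℂ) : Fin 4 → ℂ :=
  ![-(v 0) - v 2, -(v 1), v 2, v 3 - v 1]

/-- The map `L(X,Y,A,B) = (−X−A, −Y, A, B−Y)` is a symplectic involution of `(ℂ⁴, ω)`:
`L ∘ L = id` and `ω(Lu, Lv) = ω(u, v)` for all `u, v`. -/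
theorem weylL_symplectic_involution :
    (∀ u : Fin 4 → ℂ, weylL (weylL u) = u) ∧
    (∀ u v : Fin 4 → ℂ, omega4 (weylL u) (weylL v) = omega4 u v) := by
  constructor
  · intro u
    funext i
    fin_cases i <;> simp [weylL] <;> ring
  · intro u v
    simp [weylL, omega4]
    ring
end

section
/- Let q ∈ ℂ with |q| < 1, let D ⊂ ℂ be the open unit disk, let n ∈ ℕ, let c₀, …, c_n : D → ℂ and F : D → ℂ be arbitrary functions, and define φ(a) = exp(∑_{d=1}^∞ a^d / (d(1−q^d)²)) and Φ(a) = φ(a)·F(a) for a ∈ D. If ∑_{i=0}^{n} c_i(a)·F(q^i a) = 0 for all a ∈ D, then for all a ∈ D one has ∑_{i=0}^{n} c_i(a) · ( ∏_{j=1}^{i} (a;q)_{j−1} ) · (a;q)_∞^{−i} · Φ(q^i a) = 0. -/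
/-- The closed-sector topological string partition function
`φ(a) = exp(∑_{d=1}^∞ a^d / (d(1−q^d)²))`. -/
noncomputable def phiClosed (q a : ℂ) : ℂ :=
  Complex.exp (∑' d : ℕ, a ^ (d + 1) / (((d : ℂ) + 1) * (1 - q ^ (d + 1)) ^ 2))

/-!
Comparing the series for `log φ(qa)` and `log φ(a)` termwise gives
`log φ(qa) - log φ(a) = -∑_d a^d / (d (1 - q^d))`. Expanding each `log (1 - a q^k)` in its
Taylor series and summing the geometric series in `k` shows that this is `∑_k log (1 - a q^k)`,
so `φ(qa) = (a;q)_∞ φ(a)`. Iterating, `φ(q^i a) = ∏_{j<i} (q^j a;q)_∞ φ(a)`, and since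
`(a;q)_∞ = (a;q)_j (q^j a;q)_∞` the prefactor of `Φ(q^i a)` in the new recursion turns
`φ(q^i a)` back into `φ(a)`. The new recursion is therefore `φ(a)` times the old one.
-/

open Complex Finset

namespace ClosedSector

variable {q b : ℂ}

lemma norm_pow_mul_lt_one (hq : ‖q‖ ≤ 1) (hb : ‖b‖ < 1) (k : ℕ) : ‖q ^ k * b‖ < 1 := by
  rw [norm_mul, norm_pow]
  exact (mul_le_of_le_one_left (norm_nonneg b) (pow_le_one₀ (norm_nonneg q) hq)).trans_lt hb

lemma one_sub_ne_zero_of_norm_lt_one {R : Type*} [SeminormedRing R] [NormOneClass R] {z : R}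
    (hz : ‖z‖ < 1) : 1 - z ≠ 0 :=
  sub_ne_zero.2 fun h => by simp [← h] at hz

lemma one_sub_mul_pow_ne_zero (hq : ‖q‖ ≤ 1) (hb : ‖b‖ < 1) (k : ℕ) : 1 - b * q ^ k ≠ 0 :=
  one_sub_ne_zero_of_norm_lt_one (mul_comm (q ^ k) b ▸ norm_pow_mul_lt_one hq hb k)

lemma one_le_norm_natCast_add_one (d : ℕ) : 1 ≤ ‖(d : ℂ) + 1‖ := by
  rw [← Nat.cast_succ, norm_natCast]
  exact_mod_cast d.succ_pos

lemma one_sub_norm_le_norm_one_sub_pow (hq : ‖q‖ ≤ 1) (d : ℕ) :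
    1 - ‖q‖ ≤ ‖1 - q ^ (d + 1)‖ :=
  calc 1 - ‖q‖ ≤ ‖(1 : ℂ)‖ - ‖q ^ (d + 1)‖ := by
        rw [norm_one, norm_pow]
        linarith [pow_le_of_le_one (norm_nonneg q) hq (n := d + 1) d.succ_ne_zero]
    _ ≤ ‖1 - q ^ (d + 1)‖ := norm_sub_norm_le _ _

lemma summable_pow_div_mul_one_sub_pow_pow (hq : ‖q‖ < 1) (hb : ‖b‖ < 1) (m : ℕ) :
    Summable fun d : ℕ => b ^ (d + 1) / (((d : ℂ) + 1) * (1 - q ^ (d + 1)) ^ m) := by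
  refine Summable.of_norm_bounded
    (((summable_geometric_of_lt_one (norm_nonneg b) hb).mul_left ‖b‖).mul_left
      ((1 - ‖q‖) ^ m)⁻¹) fun d => ?_
  rw [norm_div, norm_mul, norm_pow, norm_pow, ← pow_succ', div_eq_inv_mul]
  gcongr
  calc (1 - ‖q‖) ^ m = 1 * (1 - ‖q‖) ^ m := (one_mul _).symm
    _ ≤ ‖(d : ℂ) + 1‖ * ‖1 - q ^ (d + 1)‖ ^ m := by
      gcongr
      exacts [one_le_norm_natCast_add_one d, one_sub_norm_le_norm_one_sub_pow hq.le d]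

lemma summable_mul_pow_pow_div (hq : ‖q‖ < 1) (hb : ‖b‖ < 1) :
    Summable fun p : ℕ × ℕ => (b * q ^ p.1) ^ (p.2 + 1) / ((p.2 : ℂ) + 1) := by
  refine Summable.of_norm_bounded
    (summable_mul_of_summable_norm (f := fun k : ℕ => ‖q‖ ^ k) (g := fun d : ℕ => ‖b‖ ^ (d + 1))
      (by simpa using summable_geometric_of_lt_one (norm_nonneg q) hq)
      (by simpa [pow_succ] using
        (summable_geometric_of_lt_one (norm_nonneg b) hb).mul_right ‖b‖)) ?_
  rintro ⟨k, d⟩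
  rw [norm_div, norm_pow, norm_mul, norm_pow, mul_pow, mul_comm]
  refine div_le_of_le_mul₀ (norm_nonneg _) (by positivity) ?_
  calc (‖q‖ ^ k) ^ (d + 1) * ‖b‖ ^ (d + 1) ≤ ‖q‖ ^ k * ‖b‖ ^ (d + 1) := by
        gcongr
        exact pow_le_of_le_one (by positivity) (pow_le_one₀ (norm_nonneg q) hq.le) d.succ_ne_zero
    _ ≤ ‖q‖ ^ k * ‖b‖ ^ (d + 1) * ‖(d : ℂ) + 1‖ :=
        le_mul_of_one_le_right (by positivity) (one_le_norm_natCast_add_one d)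

lemma hasSum_mul_pow_pow_div (hq : ‖q‖ < 1) (b : ℂ) (d : ℕ) :
    HasSum (fun k : ℕ => (b * q ^ k) ^ (d + 1) / ((d : ℂ) + 1))
      (b ^ (d + 1) / (((d : ℂ) + 1) * (1 - q ^ (d + 1)))) := by
  have hqd : ‖q ^ (d + 1)‖ < 1 := by
    rw [norm_pow]; exact pow_lt_one₀ (norm_nonneg q) hq d.succ_ne_zero
  rw [← div_div, div_eq_mul_inv _ (1 - _)]
  refine ((hasSum_geometric_of_norm_lt_one hqd).mul_left _).congr_fun fun k => ?_
  rw [mul_pow, ← pow_mul, ← pow_mul, mul_comm k]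
  ring

lemma hasSum_log_one_sub_mul_pow (hq : ‖q‖ < 1) (hb : ‖b‖ < 1) :
    HasSum (fun k : ℕ => log (1 - b * q ^ k))
      (-∑' d : ℕ, b ^ (d + 1) / (((d : ℂ) + 1) * (1 - q ^ (d + 1)))) := by
  have hsum := (summable_mul_pow_pow_div hq hb).hasSum
  have hrows : HasSum (fun k : ℕ => -log (1 - b * q ^ k)) _ :=
    hsum.prod_fiberwise fun k => by
      simpa [mul_comm] using hasSum_taylorSeries_neg_log' (norm_pow_mul_lt_one hq.le hb k)
  have hcols : HasSum (fun d : ℕ => b ^ (d + 1) / (((d : ℂ) + 1) * (1 - q ^ (d + 1)))) _ :=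
    ((Equiv.prodComm ℕ ℕ).hasSum_iff.2 hsum).prod_fiberwise (hasSum_mul_pow_pow_div hq b)
  simpa [hcols.tsum_eq] using hrows.neg

lemma hasProd_one_sub_mul_pow (hq : ‖q‖ < 1) (hb : ‖b‖ < 1) :
    HasProd (fun k : ℕ => 1 - b * q ^ k)
      (exp (-∑' d : ℕ, b ^ (d + 1) / (((d : ℂ) + 1) * (1 - q ^ (d + 1))))) :=
  hasProd_of_hasSum_log (one_sub_mul_pow_ne_zero hq.le hb) (hasSum_log_one_sub_mul_pow hq hb)

lemma tprod_one_sub_mul_pow_ne_zero (hq : ‖q‖ < 1) (hb : ‖b‖ < 1) :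
    ∏' k : ℕ, (1 - b * q ^ k) ≠ 0 := by
  rw [(hasProd_one_sub_mul_pow hq hb).tprod_eq]
  exact exp_ne_zero _

lemma tprod_one_sub_mul_pow_eq_prod_mul (hq : ‖q‖ < 1) (hb : ‖b‖ < 1) (i : ℕ) :
    ∏' k : ℕ, (1 - b * q ^ k) =
      (∏ k ∈ range i, (1 - b * q ^ k)) * ∏' k : ℕ, (1 - q ^ i * b * q ^ k) := by
  have hshift : ∀ k, 1 - b * q ^ (k + i) = 1 - q ^ i * b * q ^ k := fun k => by ring
  rw [← Multipliable.prod_mul_tprod_nat_mul' (f := fun k => 1 - b * q ^ k) (k := i)]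
  · simp only [hshift]
  · exact (hasProd_one_sub_mul_pow hq (norm_pow_mul_lt_one hq.le hb i)).multipliable.congr
      fun k => (hshift k).symm

lemma phiClosed_mul_left (hq : ‖q‖ < 1) (hb : ‖b‖ < 1) :
    phiClosed q (q * b) = (∏' k : ℕ, (1 - b * q ^ k)) * phiClosed q b := by
  have hsplit : HasSum (fun d : ℕ => (q * b) ^ (d + 1) / (((d : ℂ) + 1) * (1 - q ^ (d + 1)) ^ 2))
      ((-∑' d : ℕ, b ^ (d + 1) / (((d : ℂ) + 1) * (1 - q ^ (d + 1)))) +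
        ∑' d : ℕ, b ^ (d + 1) / (((d : ℂ) + 1) * (1 - q ^ (d + 1)) ^ 2)) := by
    have hs1 := summable_pow_div_mul_one_sub_pow_pow hq hb 1
    simp only [pow_one] at hs1
    refine (hs1.hasSum.neg.add
      (summable_pow_div_mul_one_sub_pow_pow hq hb 2).hasSum).congr_fun fun d => ?_
    have hqd : 1 - q ^ (d + 1) ≠ 0 :=
      one_sub_ne_zero_of_norm_lt_one (by simpa using pow_lt_one₀ (norm_nonneg q) hq d.succ_ne_zero)
    field_simp
    ring
  rw [phiClosed, phiClosed, hsplit.tsum_eq, exp_add, (hasProd_one_sub_mul_pow hq hb).tprod_eq]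

lemma phiClosed_pow_mul (hq : ‖q‖ < 1) (hb : ‖b‖ < 1) (i : ℕ) :
    phiClosed q (q ^ i * b) =
      (∏ j ∈ range i, ∏' k : ℕ, (1 - q ^ j * b * q ^ k)) * phiClosed q b := by
  induction i with
  | zero => simp
  | succ i ih =>
    rw [pow_succ', mul_assoc, phiClosed_mul_left hq (norm_pow_mul_lt_one hq.le hb i), ih,
      prod_range_succ]
    ring

lemma prod_mul_inv_pow_mul_phiClosed (hq : ‖q‖ < 1) (hb : ‖b‖ < 1) (i : ℕ) :
    (∏ j ∈ range i, ∏ k ∈ range j, (1 - b * q ^ k)) * ((∏' k : ℕ, (1 - b * q ^ k))⁻¹) ^ i *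
      phiClosed q (q ^ i * b) = phiClosed q b := by
  have hunit : ∀ j ∈ range i, (∏ k ∈ range j, (1 - b * q ^ k)) * (∏' k : ℕ, (1 - b * q ^ k))⁻¹ *
      ∏' k : ℕ, (1 - q ^ j * b * q ^ k) = 1 := fun j _ => by
    rw [mul_right_comm, ← tprod_one_sub_mul_pow_eq_prod_mul hq hb,
      mul_inv_cancel₀ (tprod_one_sub_mul_pow_ne_zero hq hb)]
  rw [phiClosed_pow_mul hq hb, pow_eq_prod_const, ← mul_assoc, ← prod_mul_distrib,
    ← prod_mul_distrib, prod_eq_one hunit, one_mul]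

end ClosedSector

/-- If `∑_{i=0}^n c_i(a) F(q^i a) = 0` on the unit disk, then `Φ = φ·F` satisfies
`∑_{i=0}^n c_i(a) (∏_{j=1}^{i} (a;q)_{j−1}) (a;q)_∞^{−i} Φ(q^i a) = 0` on the unit disk. -/
theorem closed_sector_recursion
    (q : ℂ) (hq : ‖q‖ < 1) (n : ℕ)
    (c : ℕ → ℂ → ℂ) (F : ℂ → ℂ)
    (hrec : ∀ a : ℂ, ‖a‖ < 1 →
      ∑ i ∈ Finset.range (n + 1), c i a * F (q ^ i * a) = 0) :
    ∀ a : ℂ, ‖a‖ < 1 →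
      ∑ i ∈ Finset.range (n + 1),
        c i a * (∏ j ∈ Finset.range i, ∏ k ∈ Finset.range j, (1 - a * q ^ k)) *
          ((∏' k : ℕ, (1 - a * q ^ k))⁻¹) ^ i *
          (phiClosed q (q ^ i * a) * F (q ^ i * a)) = 0 := by
  intro a ha
  calc _ = ∑ i ∈ range (n + 1), phiClosed q a * (c i a * F (q ^ i * a)) :=
        sum_congr rfl fun i _ => by
          rw [← ClosedSector.prod_mul_inv_pow_mul_phiClosed hq ha i]
          ring
    _ = 0 := by rw [← mul_sum, hrec a ha, mul_zero]
end

section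
/- Let q, a ∈ ℂ with |q| < 1 and |a| < 1, and let φ(a,q) = exp(∑_{d=1}^∞ a^d / (d(1−q^d)²)) and ψ(a,q) = ∑_{d=0}^∞ a^d / (q;q)_d. Then φ(a,q) = φ(aq,q) · ψ(a,q). -/
/-- The open string partition function `ψ(a,q) = ∑_{d=0}^∞ a^d / (q;q)_d`. -/
noncomputable def psiOpen (q a : ℂ) : ℂ :=
  ∑' d : ℕ, a ^ d / ∏ k ∈ Finset.range d, (1 - q ^ (k + 1))

/-! The exponent of `φ(a,q)/φ(aq,q)` telescopes termwise to `∑ a^d/(d(1-q^d))`. Its exponential and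
`ψ` both solve the `q`-difference equation `(1-a) f(a) = f(aq)`: for the exponential, the shift
changes the exponent by the series of `-log(1-a)`; for `ψ`, `(q;q)_d = (q;q)_{d-1}(1-q^d)` makes
`ψ(a) - ψ(aq)` telescope to `a ψ(a)`. Iterating the equation along `a q^n → 0` shows that it has
only one solution continuous at `0` with value `1`. -/

open Filter Topology Finset Metric

noncomputable def psiLog (q a : ℂ) : ℂ :=
  ∑' d : ℕ, a ^ (d + 1) / (((d : ℂ) + 1) * (1 - q ^ (d + 1)))

section NormedField

variable {𝕜 : Type*} [NormedField 𝕜]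

theorem one_sub_norm_le_norm_one_sub_pow_succ {q : 𝕜} (hq : ‖q‖ ≤ 1) (n : ℕ) :
    1 - ‖q‖ ≤ ‖1 - q ^ (n + 1)‖ :=
  calc 1 - ‖q‖ ≤ 1 - ‖q‖ ^ (n + 1) := by
        gcongr; exact pow_le_of_le_one (norm_nonneg q) hq n.succ_ne_zero
    _ = ‖(1 : 𝕜)‖ - ‖q ^ (n + 1)‖ := by rw [norm_one, norm_pow]
    _ ≤ ‖1 - q ^ (n + 1)‖ := norm_sub_norm_le _ _

theorem norm_mul_lt_one {a b : 𝕜} (ha : ‖a‖ < 1) (hb : ‖b‖ ≤ 1) : ‖a * b‖ < 1 := by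
  rw [norm_mul]
  exact mul_lt_one_of_nonneg_of_lt_one_left (norm_nonneg a) ha hb

theorem one_sub_pow_succ_ne_zero {q : 𝕜} (hq : ‖q‖ < 1) (n : ℕ) : 1 - q ^ (n + 1) ≠ 0 :=
  norm_pos_iff.1 <| (sub_pos.2 hq).trans_le (one_sub_norm_le_norm_one_sub_pow_succ hq.le n)

theorem summable_norm_pow_succ_div {a : 𝕜} (ha : ‖a‖ < 1) {f : ℕ → 𝕜} {m : ℝ} (hm : 0 < m)
    (hf : ∀ d, m ≤ ‖f d‖) : Summable fun d => ‖a ^ (d + 1) / f d‖ := by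
  refine ((summable_geometric_of_lt_one (norm_nonneg a) ha).mul_left (‖a‖ / m)).of_nonneg_of_le
    (fun _ => norm_nonneg _) fun d => ?_
  calc ‖a ^ (d + 1) / f d‖ = ‖a‖ ^ (d + 1) / ‖f d‖ := by rw [norm_div, norm_pow]
    _ ≤ ‖a‖ ^ (d + 1) / m := by gcongr; exact hf d
    _ = ‖a‖ / m * ‖a‖ ^ d := by ring

variable [CompleteSpace 𝕜]

theorem continuousAt_zero_tsum_pow_div {e : ℕ → ℕ} {f : ℕ → 𝕜} {c : 𝕜} (hc : c ≠ 0)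
    (hs : Summable fun d => ‖c ^ e d / f d‖) :
    ContinuousAt (fun z => ∑' d, z ^ e d / f d) 0 := by
  refine (continuousOn_tsum (fun d => ((continuous_pow (e d)).div_const (f d)).continuousOn) hs
    fun d z hz => ?_).continuousAt (closedBall_mem_nhds 0 (norm_pos_iff.2 hc))
  rw [mem_closedBall_zero_iff] at hz
  simp only [norm_div, norm_pow]
  gcongr

end NormedField

theorem eq_of_one_sub_mul_eq_comp_mul {f g : ℂ → ℂ} {q a : ℂ} (hq : ‖q‖ < 1) (ha : ‖a‖ < 1)
    (hf : ∀ b, ‖b‖ < 1 → (1 - b) * f b = f (b * q))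
    (hg : ∀ b, ‖b‖ < 1 → (1 - b) * g b = g (b * q))
    (hf0 : ContinuousAt f 0) (hg0 : ContinuousAt g 0) (h0 : f 0 = g 0) (hg0_ne : g 0 ≠ 0) :
    f a = g a := by
  have hiter (n : ℕ) : f (a * q ^ n) * g a = g (a * q ^ n) * f a := by
    induction n with
    | zero => simp [mul_comm]
    | succ n ih =>
      have hb := norm_mul_lt_one ha ((norm_pow q n).trans_le (pow_le_one₀ (norm_nonneg q) hq.le))
      rw [pow_succ, ← mul_assoc, ← hf _ hb, ← hg _ hb, mul_assoc, ih, mul_assoc]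
  have hlim : Tendsto (fun n : ℕ => a * q ^ n) atTop (𝓝 0) := by
    simpa using (tendsto_pow_atTop_nhds_zero_of_norm_lt_one hq).const_mul a
  have hfg : f 0 * g a = g 0 * f a :=
    tendsto_nhds_unique ((hf0.tendsto.comp hlim).mul_const (g a))
      (by simpa only [Function.comp_def, hiter] using (hg0.tendsto.comp hlim).mul_const (f a))
  rw [h0] at hfg
  exact (mul_left_cancel₀ hg0_ne hfg).symm

section

variable {q : ℂ}

theorem one_le_norm_natCast_add_one (d : ℕ) : 1 ≤ ‖(d : ℂ) + 1‖ := by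
  rw [← Nat.cast_succ, Complex.norm_natCast]
  exact_mod_cast d.succ_pos

theorem summable_norm_psiLog_term (hq : ‖q‖ < 1) {a : ℂ} (ha : ‖a‖ < 1) :
    Summable fun d : ℕ => ‖a ^ (d + 1) / (((d : ℂ) + 1) * (1 - q ^ (d + 1)))‖ :=
  summable_norm_pow_succ_div ha (sub_pos.2 hq) fun d => by
    rw [norm_mul]
    exact (one_sub_norm_le_norm_one_sub_pow_succ hq.le d).trans
      (le_mul_of_one_le_left (norm_nonneg _) (one_le_norm_natCast_add_one d))

theorem summable_phiClosed_term (hq : ‖q‖ < 1) {a : ℂ} (ha : ‖a‖ < 1) :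
    Summable fun d : ℕ => a ^ (d + 1) / (((d : ℂ) + 1) * (1 - q ^ (d + 1)) ^ 2) :=
  .of_norm <| summable_norm_pow_succ_div ha (pow_pos (sub_pos.2 hq) 2) fun d => by
    rw [norm_mul, norm_pow]
    exact (pow_le_pow_left₀ (sub_nonneg.2 hq.le)
      (one_sub_norm_le_norm_one_sub_pow_succ hq.le d) 2).trans
      (le_mul_of_one_le_left (by positivity) (one_le_norm_natCast_add_one d))

theorem phiClosed_eq_mul_exp_psiLog (hq : ‖q‖ < 1) {a : ℂ} (ha : ‖a‖ < 1) :
    phiClosed q a = phiClosed q (a * q) * Complex.exp (psiLog q a) := by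
  have haq := norm_mul_lt_one ha hq.le
  rw [phiClosed, phiClosed, psiLog, ← Complex.exp_add,
    ← (summable_phiClosed_term hq haq).tsum_add (summable_norm_psiLog_term hq ha).of_norm]
  refine congrArg Complex.exp (tsum_congr fun d => ?_)
  have := one_sub_pow_succ_ne_zero hq d
  field_simp
  ring

theorem psiLog_eq_psiLog_mul_sub_log (hq : ‖q‖ < 1) {a : ℂ} (ha : ‖a‖ < 1) :
    psiLog q a = psiLog q (a * q) - Complex.log (1 - a) := by
  have haq := norm_mul_lt_one ha hq.le
  have hlog := Complex.hasSum_taylorSeries_neg_log' ha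
  rw [sub_eq_add_neg, ← hlog.tsum_eq, psiLog, psiLog,
    ← (summable_norm_psiLog_term hq haq).of_norm.tsum_add hlog.summable]
  refine tsum_congr fun d => ?_
  have := one_sub_pow_succ_ne_zero hq d
  field_simp
  ring

theorem one_sub_mul_exp_psiLog (hq : ‖q‖ < 1) {a : ℂ} (ha : ‖a‖ < 1) :
    (1 - a) * Complex.exp (psiLog q a) = Complex.exp (psiLog q (a * q)) := by
  have h1a : 1 - a ≠ 0 := sub_ne_zero.2 fun h => by simp [← h] at ha
  rw [psiLog_eq_psiLog_mul_sub_log hq ha, Complex.exp_sub, Complex.exp_log h1a]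
  field_simp

theorem summable_norm_psiOpen_term (hq : ‖q‖ < 1) {a : ℂ} (ha : ‖a‖ < 1) :
    Summable fun d => ‖a ^ d / ∏ k ∈ range d, (1 - q ^ (k + 1))‖ := by
  have hratio : Tendsto (fun d : ℕ => ‖a‖ / ‖1 - q ^ (d + 1)‖) atTop (𝓝 ‖a‖) := by
    have hpow := (tendsto_pow_atTop_nhds_zero_of_norm_lt_one hq).comp (tendsto_add_atTop_nat 1)
    have hnorm : Tendsto (fun d : ℕ => ‖1 - q ^ (d + 1)‖) atTop (𝓝 1) := by
      simpa using (hpow.const_sub 1).norm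
    have h := (tendsto_const_nhds (x := ‖a‖)).div hnorm one_ne_zero
    rw [div_one] at h
    exact h
  refine summable_of_ratio_norm_eventually_le (r := (1 + ‖a‖) / 2) (by linarith) ?_
  filter_upwards [hratio.eventually_le_const (show ‖a‖ < (1 + ‖a‖) / 2 by linarith)] with d hd
  rw [norm_norm, norm_norm, prod_range_succ, pow_succ, mul_div_mul_comm, norm_mul, mul_comm]
  exact mul_le_mul_of_nonneg_right ((norm_div _ _).trans_le hd) (norm_nonneg _)

theorem one_sub_mul_psiOpen (hq : ‖q‖ < 1) {a : ℂ} (ha : ‖a‖ < 1) :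
    (1 - a) * psiOpen q a = psiOpen q (a * q) := by
  have haq := norm_mul_lt_one ha hq.le
  set P : ℕ → ℂ := fun d => ∏ k ∈ range d, (1 - q ^ (k + 1))
  have hsum : Summable fun d => a ^ d / P d - (a * q) ^ d / P d :=
    (summable_norm_psiOpen_term hq ha).of_norm.sub (summable_norm_psiOpen_term hq haq).of_norm
  have hstep (d : ℕ) :
      a ^ (d + 1) / P (d + 1) - (a * q) ^ (d + 1) / P (d + 1) = a * (a ^ d / P d) := by
    have hP : P d ≠ 0 := prod_ne_zero_iff.2 fun k _ => one_sub_pow_succ_ne_zero hq k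
    have := one_sub_pow_succ_ne_zero hq d
    simp only [P, prod_range_succ]
    field_simp
    ring
  suffices psiOpen q a - psiOpen q (a * q) = a * psiOpen q a by linear_combination this
  calc psiOpen q a - psiOpen q (a * q) = ∑' d, (a ^ d / P d - (a * q) ^ d / P d) :=
        ((summable_norm_psiOpen_term hq ha).of_norm.tsum_sub
          (summable_norm_psiOpen_term hq haq).of_norm).symm
    _ = ∑' d, a * (a ^ d / P d) := by
        rw [hsum.tsum_eq_zero_add]
        simp only [hstep, P, pow_zero, prod_range_zero, sub_self, zero_add]
    _ = a * psiOpen q a := tsum_mul_left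

theorem psiOpen_eq_exp_psiLog (hq : ‖q‖ < 1) {a : ℂ} (ha : ‖a‖ < 1) :
    psiOpen q a = Complex.exp (psiLog q a) := by
  have hc : ‖(2⁻¹ : ℂ)‖ < 1 := by norm_num
  refine eq_of_one_sub_mul_eq_comp_mul hq ha (fun b hb => one_sub_mul_psiOpen hq hb)
    (fun b hb => one_sub_mul_exp_psiLog hq hb)
    (continuousAt_zero_tsum_pow_div (e := fun d => d) (by norm_num)
      (summable_norm_psiOpen_term hq hc))
    (Complex.continuous_exp.continuousAt.comp
      (continuousAt_zero_tsum_pow_div (by norm_num) (summable_norm_psiLog_term hq hc)))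
    ?_ (Complex.exp_ne_zero _)
  rw [psiOpen, tsum_eq_single 0 fun d hd => by simp [hd]]
  simp [psiLog]

end

/-- For `|q| < 1` and `|a| < 1` one has `φ(a,q) = φ(aq,q) · ψ(a,q)`. -/
theorem phi_eq_phi_shift_mul_psi (q a : ℂ)
    (hq : ‖q‖ < 1) (ha : ‖a‖ < 1) :
    phiClosed q a = phiClosed q (a * q) * psiOpen q a := by
  rw [psiOpen_eq_exp_psiLog hq ha]
  exact phiClosed_eq_mul_exp_psiLog hq ha
end

section
/- Let q, a ∈ ℂ with |q| < 1 and |q²a| < 1 (in particular |a|·|q|² < 1 and |a| < 1 suffice), and let φ(a,q) = exp(∑_{d=1}^∞ a^d / (d(1−q^d)²)). Then (1−a) · φ(a,q) · φ(q²a, q) = φ(qa, q)². -/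
open Complex

section NormBounds

variable {R : Type*} [SeminormedRing R] [NormOneClass R]

theorem one_sub_norm_le_norm_one_sub_pow {q : R} (hq : ‖q‖ ≤ 1) {n : ℕ} (hn : n ≠ 0) :
    1 - ‖q‖ ≤ ‖1 - q ^ n‖ :=
  calc 1 - ‖q‖ ≤ 1 - ‖q‖ ^ n := by gcongr; exact pow_le_of_le_one (norm_nonneg q) hq hn
    _ ≤ 1 - ‖q ^ n‖ := by gcongr; exact norm_pow_le q n
    _ ≤ ‖1 - q ^ n‖ := by simpa using norm_sub_norm_le (1 : R) (q ^ n)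

end NormBounds

namespace PhiClosed

noncomputable def term (q a : ℂ) (d : ℕ) : ℂ :=
  a ^ (d + 1) / (((d : ℂ) + 1) * (1 - q ^ (d + 1)) ^ 2)

theorem phiClosed_eq_exp_tsum (q a : ℂ) : phiClosed q a = exp (∑' d, term q a d) := rfl

theorem norm_term_le {q : ℂ} (hq : ‖q‖ < 1) (a : ℂ) (d : ℕ) :
    ‖term q a d‖ ≤ ‖a‖ ^ (d + 1) / (1 - ‖q‖) ^ 2 := by
  have hlb := one_sub_norm_le_norm_one_sub_pow hq.le d.succ_ne_zero
  have hd : (1 : ℝ) ≤ ‖(d : ℂ) + 1‖ := by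
    rw [← Nat.cast_succ, Complex.norm_natCast, Nat.cast_succ]
    linarith [d.cast_nonneg (α := ℝ)]
  rw [term, norm_div, norm_mul, norm_pow, norm_pow]
  gcongr
  calc (1 - ‖q‖) ^ 2 = 1 * (1 - ‖q‖) ^ 2 := (one_mul _).symm
    _ ≤ ‖(d : ℂ) + 1‖ * ‖1 - q ^ (d + 1)‖ ^ 2 := by gcongr

theorem summable_term {q a : ℂ} (hq : ‖q‖ < 1) (ha : ‖a‖ < 1) : Summable (term q a) :=
  .of_norm_bounded
    (((summable_geometric_of_lt_one (norm_nonneg a) ha).mul_left ‖a‖).div_const _)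
    fun d => (norm_term_le hq a d).trans_eq (by rw [pow_succ'])

theorem term_sub_two_mul_term_add_term {q : ℂ} (a : ℂ) {d : ℕ} (hq : 1 - q ^ (d + 1) ≠ 0) :
    term q a d - 2 * term q (q * a) d + term q (q ^ 2 * a) d = a ^ (d + 1) / ((d : ℂ) + 1) := by
  have hd : (d : ℂ) + 1 ≠ 0 := Nat.cast_add_one_ne_zero d
  simp only [term, mul_pow, ← pow_mul, Nat.mul_comm 2]
  field_simp
  ring

theorem tsum_term_sub_two_mul_tsum_term_add_tsum_term {q a : ℂ} (hq : ‖q‖ < 1) (ha : ‖a‖ < 1) :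
    ∑' d, term q a d - 2 * ∑' d, term q (q * a) d + ∑' d, term q (q ^ 2 * a) d =
      -log (1 - a) := by
  have hqa : ‖q * a‖ < 1 := by
    rw [norm_mul]; exact (mul_le_of_le_one_left (norm_nonneg a) hq.le).trans_lt ha
  have hq2a : ‖q ^ 2 * a‖ < 1 := by
    rw [norm_mul, norm_pow]
    exact (mul_le_of_le_one_left (norm_nonneg a) (pow_le_one₀ (norm_nonneg q) hq.le)).trans_lt ha
  have hterm : ∀ d : ℕ, term q a d - 2 * term q (q * a) d + term q (q ^ 2 * a) d =
      a ^ (d + 1) / ((d : ℂ) + 1) := fun d =>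
    term_sub_two_mul_term_add_term a <| norm_pos_iff.mp <|
      (sub_pos.mpr hq).trans_le (one_sub_norm_le_norm_one_sub_pow hq.le d.succ_ne_zero)
  have hsum := ((summable_term hq ha).hasSum.sub
    ((summable_term hq hqa).hasSum.mul_left 2)).add (summable_term hq hq2a).hasSum
  rw [funext hterm] at hsum
  exact hsum.unique (hasSum_taylorSeries_neg_log' ha)

end PhiClosed

open PhiClosed in
theorem phi_quadratic_recursion_general (q a : ℂ)
    (hq : ‖q‖ < 1) (ha : ‖a‖ < 1) :
    (1 - a) * phiClosed q a * phiClosed q (q ^ 2 * a) = (phiClosed q (q * a)) ^ 2 := by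
  have h1a : (1 : ℂ) - a ≠ 0 := sub_ne_zero.mpr fun h => by simp [← h] at ha
  have hexp : log (1 - a) + ∑' d, term q a d + ∑' d, term q (q ^ 2 * a) d =
      ∑' d, term q (q * a) d + ∑' d, term q (q * a) d := by
    linear_combination tsum_term_sub_two_mul_tsum_term_add_tsum_term hq ha
  simp only [phiClosed_eq_exp_tsum]
  rw [← exp_log h1a, ← exp_add, ← exp_add, hexp, exp_add, sq]

/-- The nonlinear recursion for the closed-sector partition function:
`(1−a) · φ(a,q) · φ(q²a,q) = φ(qa,q)²`. -/
theorem phi_quadratic_recursion (q a : ℂ)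
    (hq : ‖q‖ < 1) (ha : ‖a‖ < 1)
    (hqa : ‖q ^ 2 * a‖ < 1) :
    (1 - a) * phiClosed q a * phiClosed q (q ^ 2 * a) = (phiClosed q (q * a)) ^ 2 :=
  phi_quadratic_recursion_general q a hq ha
end

section
/- Let K be a field and q ∈ K a nonzero element with q^m ≠ 1 for all integers m ≥ 1. For integers N and β with N + β ≥ 2 and for α ∈ ℕ define P_{α,β}(N) := ∑_{i=0}^{N−2+β} q^{αi} / ((q;q)_i · (q;q)_{N−2+β−i}), and for M ≥ 2 define a_M := ∑_{i=0}^{M−2} 1/((q;q)_i · (q;q)_{M−2−i}), so that P_{0,β}(N) = a_{N+β}. Then for every integer α ≥ 1, P_{α,β}(N) = a_{N+β} − ∑_{δ=0}^{α−1} q^{δ} · P_{δ, β−1}(N) (where P_{δ,β−1}(N) is interpreted as the empty sum 0 if N−2+(β−1) < 0). -/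
/-- The q-Pochhammer symbol `(q;q)_n = ∏_{k=1}^{n} (1 − qᵏ)`. -/
def pochQ {K : Type*} [Field K] (q : K) (n : ℕ) : K :=
  ∏ k ∈ Finset.range n, (1 - q ^ (k + 1))

/-- `P_{α,β}(N) = ∑_{i=0}^{N−2+β} q^{αi} / ((q;q)_i (q;q)_{N−2+β−i})`, recorded as a
function of `α` and `t = N − 2 + β`.  For `t < 0` this is the empty sum `0`. -/
def Pab {K : Type*} [Field K] (q : K) (α : ℕ) (t : ℤ) : K :=
  ∑ i ∈ Finset.range (t + 1).toNat, q ^ (α * i) / (pochQ q i * pochQ q (t.toNat - i))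

/-- `a_M = ∑_{i=0}^{M−2} 1 / ((q;q)_i (q;q)_{M−2−i})`. -/
def aCoeff {K : Type*} [Field K] (q : K) (M : ℤ) : K :=
  ∑ i ∈ Finset.range (M - 1).toNat, 1 / (pochQ q i * pochQ q ((M - 2).toNat - i))

/-- Natural-index version of `Pab`. -/
def PabN {K : Type*} [Field K] (q : K) (α n : ℕ) : K :=
  ∑ i ∈ Finset.range (n + 1), q ^ (α * i) / (pochQ q i * pochQ q (n - i))

lemma pochQ_ne_zero {K : Type*} [Field K] {q : K} (hq : ∀ m : ℕ, 1 ≤ m → q ^ m ≠ 1)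
    (n : ℕ) : pochQ q n ≠ 0 := by
  apply Finset.prod_ne_zero_iff.2
  intro k _
  exact sub_ne_zero.2 fun h => hq (k + 1) (Nat.le_add_left _ _) h.symm

lemma pochQ_succ {K : Type*} [Field K] (q : K) (n : ℕ) :
    pochQ q (n + 1) = pochQ q n * (1 - q ^ (n + 1)) := Finset.prod_range_succ _ _

lemma Pab_natCast {K : Type*} [Field K] (q : K) (α n : ℕ) :
    Pab q α (n : ℤ) = PabN q α n := by
  simp [Pab, PabN]

lemma Pab_neg {K : Type*} [Field K] (q : K) (α : ℕ) {t : ℤ} (ht : t < 0) :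
    Pab q α t = 0 := by
  have : (t + 1).toNat = 0 := by omega
  simp [Pab, this]

lemma PabN_step {K : Type*} [Field K] {q : K} (hq : ∀ m : ℕ, 1 ≤ m → q ^ m ≠ 1)
    (α n : ℕ) :
    PabN q (α + 1) (n + 1) = PabN q α (n + 1) - q ^ α * PabN q α n := by
  unfold PabN
  rw [Finset.sum_range_succ' (fun i => q ^ ((α+1) * i) / (pochQ q i * pochQ q (n + 1 - i))),
      Finset.sum_range_succ' (fun i => q ^ (α * i) / (pochQ q i * pochQ q (n + 1 - i))),
      Finset.mul_sum]
  simp only [Nat.mul_zero, pow_zero]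
  rw [add_sub_right_comm, add_left_inj (1 / (pochQ q 0 * pochQ q (n + 1 - 0))), ← Finset.sum_sub_distrib]
  apply Finset.sum_congr rfl
  intro i _
  have h1 : pochQ q i ≠ 0 := pochQ_ne_zero hq i
  have h2 : pochQ q (i + 1) ≠ 0 := pochQ_ne_zero hq (i + 1)
  have h3 : pochQ q (n + 1 - (i + 1)) ≠ 0 := pochQ_ne_zero hq _
  have hs : n + 1 - (i + 1) = n - i := by omega
  rw [hs, pochQ_succ]
  have h4 : pochQ q (n - i) ≠ 0 := pochQ_ne_zero hq _
  have h5 : (1 : K) - q ^ (i + 1) ≠ 0 :=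
    sub_ne_zero.2 fun h => hq (i + 1) (Nat.le_add_left _ _) h.symm
  field_simp
  ring

lemma PabN_main {K : Type*} [Field K] {q : K} (hq : ∀ m : ℕ, 1 ≤ m → q ^ m ≠ 1)
    (α n : ℕ) :
    PabN q α n = PabN q 0 n - ∑ δ ∈ Finset.range α, q ^ δ * Pab q δ ((n : ℤ) - 1) := by
  induction α with
  | zero => simp
  | succ α ih =>
    rw [Finset.sum_range_succ]
    cases n with
    | zero =>
      have h0 : ∀ β : ℕ, PabN q β 0 = 1 / (pochQ q 0 * pochQ q 0) := by
        intro β; simp [PabN]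
      have hneg : ∀ δ : ℕ, Pab q δ ((0 : ℕ) - 1 : ℤ) = 0 := fun δ => Pab_neg q δ (by norm_num)
      simp only [hneg, mul_zero, Finset.sum_const_zero, h0]
      ring
    | succ m =>
      have hm : ((m + 1 : ℕ) : ℤ) - 1 = (m : ℤ) := by push_cast; ring
      rw [PabN_step hq, ih, hm]
      rw [Pab_natCast]
      ring

/-- Recursion for the coefficients `P_{α,β}(N)`: for `α ≥ 1` and `N + β ≥ 2`,
`P_{α,β}(N) = a_{N+β} − ∑_{δ=0}^{α−1} q^δ P_{δ,β−1}(N)` (with `P_{δ,β−1}(N)` the empty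
sum `0` when `N − 2 + (β − 1) < 0`). -/
theorem Pab_recursion {K : Type*} [Field K] (q : K) (hq0 : q ≠ 0)
    (hq : ∀ m : ℕ, 1 ≤ m → q ^ m ≠ 1)
    (N β : ℤ) (hNβ : 2 ≤ N + β) (α : ℕ) (hα : 1 ≤ α) :
    Pab q α (N - 2 + β) =
      aCoeff q (N + β) - ∑ δ ∈ Finset.range α, q ^ δ * Pab q δ (N - 2 + (β - 1)) := by
  set n : ℕ := (N - 2 + β).toNat with hn
  have ht : N - 2 + β = (n : ℤ) := by rw [hn]; omega
  have ht' : N - 2 + (β - 1) = (n : ℤ) - 1 := by omega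
  have ha : aCoeff q (N + β) = PabN q 0 n := by
    unfold aCoeff PabN
    have h1 : (N + β - 1).toNat = n + 1 := by omega
    have h2 : (N + β - 2).toNat = n := by omega
    simp [h1, h2]
  rw [ht, ht', Pab_natCast, ha, PabN_main hq]
end

section
/- Let m ≥ 1, let C be a symmetric m×m matrix with integer entries, let a₁,…,a_m ∈ ℕ and l₁,…,l_m ∈ ℝ, and let A > 0 be real. For real q ∈ (0,1) let c₁(q) := ∑_{i=1}^{m} (−1)^{C_{ii}} q^{C_{ii}/2 + l_i} A^{a_i}/(1−q) and c₂(q) := ∑_{i=1}^{m} q^{2C_{ii}+2l_i} A^{2a_i}/((1−q)(1−q²)) + ∑_{1≤i<j≤m} (−1)^{C_{ii}+C_{jj}} q^{(C_{ii}+C_{jj})/2 + C_{ij} + l_i + l_j} A^{a_i+a_j}/(1−q)² (the coefficients of x¹ and x² in the quiver generating series). Then lim_{q→1⁻} [ (q²−1)·c₂(q) − (q−1)·c₁(q)² ] = ∑_{i=1}^{m} C_{ii} A^{2a_i} + ∑_{1≤i<j≤m} (−1)^{C_{ii}+C_{jj}} (1+2C_{ij}) A^{a_i+a_j}. Consequently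 the second coefficient y₂ of the classical series y(x) = lim_{q→1}P_Q(qx)/P_Q(x) = 1 + y₁x + y₂x² + … equals ∑_i C_{ii} A^{2a_i} + ∑_{i<j} (−1)^{C_{ii}+C_{jj}}(1+2C_{ij}) A^{a_i+a_j}. -/
/-!
Put `u i = (-1)^{C_ii} q^{C_ii/2 + l_i} A^{a_i}`, so that `c₁ = ∑ u i / (1 - q)`. Expanding the
square of `∑ u i` turns `(q² - 1) c₂ - (q - 1) c₁²` into a sum of terms `N(q) / (1 - q)`, one for
each `i` and one for each pair `i < j`, whose numerators are signed combinations of powers `q^α`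
vanishing at `q = 1` (the signs `(-1)^{2 C_ii}` being `1`). Each term then tends to `-N'(1)`,
and `d/dq q^α = α` at `q = 1`.
-/

open Filter Topology Finset

theorem Finset.sq_sum_eq_sum_sq_add_two_mul_sum_lt {ι R : Type*} [Fintype ι] [LinearOrder ι]
    [CommSemiring R] (f : ι → R) :
    (∑ i, f i) ^ 2 = ∑ i, f i ^ 2 + 2 * ∑ i, ∑ j, if i < j then f i * f j else 0 := by
  have hsplit : ∀ i j, f i * f j = ((if i = j then f i ^ 2 else 0) +
      (if i < j then f i * f j else 0)) + (if j < i then f j * f i else 0) := by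
    intro i j
    rcases lt_trichotomy i j with h | rfl | h
    · simp [h, h.ne, h.not_gt]
    · simp [sq]
    · simp [h, h.ne', h.not_gt, mul_comm]
  have hswap : (∑ i, ∑ j, if j < i then f j * f i else 0) =
      ∑ i, ∑ j, if i < j then f i * f j else 0 := Finset.sum_comm
  calc (∑ i, f i) ^ 2 = ∑ i, ∑ j, f i * f j := by rw [sq, Fintype.sum_mul_sum]
    _ = _ := Finset.sum_congr rfl fun i _ => Finset.sum_congr rfl fun j _ => hsplit i j
    _ = _ := by
      simp only [Finset.sum_add_distrib, hswap, Finset.sum_ite_eq, Finset.mem_univ, if_true]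
      ring

section PairSums

variable {ι : Type*} [Fintype ι] [LinearOrder ι]

lemma sum_sum_ite_lt_div {K : Type*} [DivisionSemiring K] (g : ι → ι → K) (c : K) :
    (∑ i, ∑ j, if i < j then g i j / c else 0) = (∑ i, ∑ j, if i < j then g i j else 0) / c := by
  simp only [Finset.sum_div, ite_div, zero_div]

lemma sum_sum_ite_lt_mul_sub_mul {R : Type*} [CommRing R] (g h : ι → ι → R) (a b : R) :
    (∑ i, ∑ j, if i < j then a * g i j - b * h i j else 0) =
      a * (∑ i, ∑ j, if i < j then g i j else 0) - b * ∑ i, ∑ j, if i < j then h i j else 0 := by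
  simp only [Finset.mul_sum, ← Finset.sum_sub_distrib, mul_ite, mul_zero]
  refine Finset.sum_congr rfl fun i _ => Finset.sum_congr rfl fun j _ => ?_
  split_ifs <;> ring

lemma second_coeff_combination_eq {K : Type*} [Field K] {q : K} (hq₁ : 1 - q ≠ 0)
    (hq₂ : 1 + q ≠ 0) (u D : ι → K) (O : ι → ι → K) :
    (q ^ 2 - 1) * (∑ i, D i / ((1 - q) * (1 - q ^ 2)) +
        ∑ i, ∑ j, if i < j then O i j / (1 - q) ^ 2 else 0) - (q - 1) * (∑ i, u i / (1 - q)) ^ 2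
      = ∑ i, (u i ^ 2 - D i) / (1 - q) +
        ∑ i, ∑ j, if i < j then (2 * (u i * u j) - (1 + q) * O i j) / (1 - q) else 0 := by
  have hq₃ : 1 - q ^ 2 ≠ 0 := by
    rw [show 1 - q ^ 2 = (1 - q) * (1 + q) by ring]
    exact mul_ne_zero hq₁ hq₂
  simp only [sum_sum_ite_lt_div, sum_sum_ite_lt_mul_sub_mul, ← Finset.sum_div,
    Finset.sum_sub_distrib, div_pow, Finset.sq_sum_eq_sum_sq_add_two_mul_sum_lt]
  field_simp
  ring

end PairSums

theorem Filter.Tendsto.ite_zero {α β : Type*} [Zero β] [TopologicalSpace β] {l : Filter α}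
    {f : α → β} {b : β} (p : Prop) [Decidable p] (h : Tendsto f l (𝓝 b)) :
    Tendsto (fun x => if p then f x else 0) l (𝓝 (if p then b else 0)) := by
  split_ifs
  exacts [h, tendsto_const_nhds]

lemma tendsto_div_one_sub_of_hasDerivAt {f : ℝ → ℝ} {d : ℝ} (hf : HasDerivAt f d 1)
    (h1 : f 1 = 0) : Tendsto (fun q => f q / (1 - q)) (𝓝[≠] 1) (𝓝 (-d)) := by
  refine (hasDerivAt_iff_tendsto_slope.mp hf).neg.congr fun q => ?_
  rw [slope_def_field, h1, sub_zero, ← div_neg, neg_sub]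

lemma tendsto_rpow_sub_rpow_div_one_sub (α β : ℝ) :
    Tendsto (fun q : ℝ => (q ^ α - q ^ β) / (1 - q)) (𝓝[≠] 1) (𝓝 (β - α)) := by
  have hα := Real.hasDerivAt_rpow_const (x := 1) (p := α) (Or.inl one_ne_zero)
  have hβ := Real.hasDerivAt_rpow_const (x := 1) (p := β) (Or.inl one_ne_zero)
  simpa using tendsto_div_one_sub_of_hasDerivAt (hα.sub hβ) (by simp)

lemma tendsto_two_mul_rpow_sub_one_add_mul_rpow_div_one_sub (E c : ℝ) :
    Tendsto (fun q : ℝ => (2 * q ^ E - (1 + q) * q ^ (E + c)) / (1 - q)) (𝓝[≠] 1)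
      (𝓝 (1 + 2 * c)) := by
  have hE := (Real.hasDerivAt_rpow_const (x := 1) (p := E) (Or.inl one_ne_zero)).const_mul 2
  have hEc := ((hasDerivAt_id (1 : ℝ)).const_add 1).mul
    (Real.hasDerivAt_rpow_const (x := 1) (p := E + c) (Or.inl one_ne_zero))
  have h := tendsto_div_one_sub_of_hasDerivAt
    (f := fun q => 2 * q ^ E - (1 + q) * q ^ (E + c)) (hE.sub hEc) (by norm_num)
  convert h using 2
  simp
  ring

lemma eventually_pos_nhdsNE_one : ∀ᶠ q : ℝ in 𝓝[≠] 1, 0 < q :=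
  eventually_nhdsWithin_of_eventually_nhds (eventually_gt_nhds one_pos)

lemma signed_monomial_mul {q : ℝ} (hq : 0 < q) (k k' : ℤ) (e e' B : ℝ) (n n' : ℕ) :
    ((-1 : ℝ) ^ k * q ^ e * B ^ n) * ((-1 : ℝ) ^ k' * q ^ e' * B ^ n') =
      (-1 : ℝ) ^ (k + k') * q ^ (e + e') * B ^ (n + n') := by
  rw [zpow_add₀ (by norm_num), Real.rpow_add hq, pow_add]
  ring

lemma tendsto_diag_term (k : ℤ) (l B : ℝ) (n : ℕ) :
    Tendsto (fun q : ℝ => (((-1 : ℝ) ^ k * q ^ ((k : ℝ) / 2 + l) * B ^ n) ^ 2 -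
        q ^ (2 * (k : ℝ) + 2 * l) * B ^ (2 * n)) / (1 - q)) (𝓝[≠] 1) (𝓝 (k * B ^ (2 * n))) := by
  have h := (tendsto_rpow_sub_rpow_div_one_sub ((k : ℝ) + 2 * l) (2 * k + 2 * l)).const_mul
    (B ^ (2 * n))
  rw [show B ^ (2 * n) * ((2 * (k : ℝ) + 2 * l) - (k + 2 * l)) = k * B ^ (2 * n) by ring] at h
  refine h.congr' ?_
  filter_upwards [eventually_pos_nhdsNE_one] with q hq
  rw [sq, signed_monomial_mul hq, Even.neg_one_zpow ⟨k, rfl⟩]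
  ring_nf

lemma tendsto_offDiag_term (k k' : ℤ) (c l l' B : ℝ) (n n' : ℕ) :
    Tendsto (fun q : ℝ => (2 * (((-1 : ℝ) ^ k * q ^ ((k : ℝ) / 2 + l) * B ^ n) *
        ((-1 : ℝ) ^ k' * q ^ ((k' : ℝ) / 2 + l') * B ^ n')) -
        (1 + q) * ((-1 : ℝ) ^ (k + k') * q ^ (((k : ℝ) + k') / 2 + c + l + l') * B ^ (n + n'))) /
          (1 - q)) (𝓝[≠] 1) (𝓝 ((-1 : ℝ) ^ (k + k') * (1 + 2 * c) * B ^ (n + n'))) := by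
  have h := (tendsto_two_mul_rpow_sub_one_add_mul_rpow_div_one_sub
    (((k : ℝ) + k') / 2 + l + l') c).const_mul ((-1 : ℝ) ^ (k + k') * B ^ (n + n'))
  rw [mul_right_comm] at h
  refine h.congr' ?_
  filter_upwards [eventually_pos_nhdsNE_one] with q hq
  rw [signed_monomial_mul hq]
  ring_nf

theorem quiver_second_classical_coefficient_general
    (m : ℕ) (C : Fin m → Fin m → ℤ)
    (a : Fin m → ℕ) (l : Fin m → ℝ)
    (A : ℝ) :
    Filter.Tendsto
      (fun q : ℝ =>
        (q ^ 2 - 1) *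
            (∑ i : Fin m,
                q ^ (2 * (C i i : ℝ) + 2 * l i) * A ^ (2 * a i) /
                  ((1 - q) * (1 - q ^ 2)) +
              ∑ i : Fin m, ∑ j : Fin m,
                if i < j then
                  (-1 : ℝ) ^ (C i i + C j j) *
                    q ^ (((C i i : ℝ) + (C j j : ℝ)) / 2 + (C i j : ℝ) + l i + l j) *
                    A ^ (a i + a j) / (1 - q) ^ 2
                else 0) -
          (q - 1) *
            (∑ i : Fin m,
                (-1 : ℝ) ^ (C i i) * q ^ ((C i i : ℝ) / 2 + l i) * A ^ (a i) / (1 - q)) ^ 2)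
      (nhdsWithin 1 (Set.Ioo (0 : ℝ) 1))
      (nhds (∑ i : Fin m, (C i i : ℝ) * A ^ (2 * a i) +
        ∑ i : Fin m, ∑ j : Fin m,
          if i < j then
            (-1 : ℝ) ^ (C i i + C j j) * (1 + 2 * (C i j : ℝ)) * A ^ (a i + a j)
          else 0)) := by
  have hdiag := tendsto_finsetSum univ fun i _ => tendsto_diag_term (C i i) (l i) A (a i)
  have hoffDiag := tendsto_finsetSum univ fun i _ => tendsto_finsetSum univ fun j _ =>
    (tendsto_offDiag_term (C i i) (C j j) (C i j) (l i) (l j) A (a i) (a j)).ite_zero (i < j)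
  refine ((hdiag.add hoffDiag).mono_left (nhdsWithin_mono _ fun q hq => hq.2.ne)).congr' ?_
  filter_upwards [self_mem_nhdsWithin] with q ⟨hq₀, hq₁⟩
  exact (second_coeff_combination_eq (by linarith) (by linarith) _ _ _).symm

/-- Second classical coefficient from a quiver: with
`c₁(q) = ∑_i (−1)^{C_{ii}} q^{C_{ii}/2 + l_i} A^{a_i}/(1−q)` and
`c₂(q) = ∑_i q^{2C_{ii}+2l_i} A^{2a_i}/((1−q)(1−q²))
       + ∑_{i<j} (−1)^{C_{ii}+C_{jj}} q^{(C_{ii}+C_{jj})/2 + C_{ij} + l_i + l_j} A^{a_i+a_j}/(1−q)²`,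
one has `lim_{q→1⁻} [(q²−1)c₂(q) − (q−1)c₁(q)²]
  = ∑_i C_{ii} A^{2a_i} + ∑_{i<j} (−1)^{C_{ii}+C_{jj}}(1+2C_{ij}) A^{a_i+a_j}`. -/
theorem quiver_second_classical_coefficient
    (m : ℕ) (hm : 1 ≤ m) (C : Fin m → Fin m → ℤ)
    (hC : ∀ i j, C i j = C j i) (a : Fin m → ℕ) (l : Fin m → ℝ)
    (A : ℝ) (hA : 0 < A) :
    Filter.Tendsto
      (fun q : ℝ =>
        (q ^ 2 - 1) *
            (∑ i : Fin m,
                q ^ (2 * (C i i : ℝ) + 2 * l i) * A ^ (2 * a i) /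
                  ((1 - q) * (1 - q ^ 2)) +
              ∑ i : Fin m, ∑ j : Fin m,
                if i < j then
                  (-1 : ℝ) ^ (C i i + C j j) *
                    q ^ (((C i i : ℝ) + (C j j : ℝ)) / 2 + (C i j : ℝ) + l i + l j) *
                    A ^ (a i + a j) / (1 - q) ^ 2
                else 0) -
          (q - 1) *
            (∑ i : Fin m,
                (-1 : ℝ) ^ (C i i) * q ^ ((C i i : ℝ) / 2 + l i) * A ^ (a i) / (1 - q)) ^ 2)
      (nhdsWithin 1 (Set.Ioo (0 : ℝ) 1))
      (nhds (∑ i : Fin m, (C i i : ℝ) * A ^ (2 * a i) +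
        ∑ i : Fin m, ∑ j : Fin m,
          if i < j then
            (-1 : ℝ) ^ (C i i + C j j) * (1 + 2 * (C i j : ℝ)) * A ^ (a i + a j)
          else 0)) :=
  quiver_second_classical_coefficient_general m C a l A
end

section
/- Let C be the symmetric real 6×6 matrix C = [[0,0,0,0,0,0],[0,0,−1,−1,0,0],[0,−1,0,0,1,0],[0,−1,0,1,1,0],[0,0,1,1,1,0],[0,0,0,0,0,1]], and let Δ = { d ∈ ℝ⁶ : d_i ≥ 0 for all i and d₁+⋯+d₆ = 1 } be the standard simplex. Then the minimum of the quadratic form d ↦ dᵀCd over Δ equals −1/2, and it is attained at the unique point d = (0, 1/2, 1/2, 0, 0, 0). -/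
/-!
On the simplex the constant `1/2` can be homogenised with `∑ dᵢ = 1`, which turns `dᵀCd + 1/2`
into `½(d₁ - d₂ - d₃)² + (d₃ + d₄)² + 2d₂d₄ + d₅² + ½(d₀ + d₄ + d₅)(1 + d₁ + d₂ + d₃)`,
a sum of terms that are nonnegative on the orthant. Its vanishing forces `d₀ = d₃ = d₄ = d₅ = 0`
and `d₁ = d₂`, i.e. `d = (0, 1/2, 1/2, 0, 0, 0)`.
-/

namespace FigureEight

def quiver : Matrix (Fin 6) (Fin 6) ℝ :=
  !![0, 0, 0, 0, 0, 0;
     0, 0, -1, -1, 0, 0;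
     0, -1, 0, 0, 1, 0;
     0, -1, 0, 1, 1, 0;
     0, 0, 1, 1, 1, 0;
     0, 0, 0, 0, 0, 1]

noncomputable def slack (d : Fin 6 → ℝ) : ℝ :=
  1 / 2 * (d 1 - d 2 - d 3) ^ 2 + (d 3 + d 4) ^ 2 + 2 * d 2 * d 4 + d 5 ^ 2 +
    1 / 2 * (d 0 + d 4 + d 5) * (1 + d 1 + d 2 + d 3)

theorem sum_quiver_mul_eq (d : Fin 6 → ℝ) :
    ∑ i, ∑ j, quiver i j * d i * d j =
      -2 * d 1 * d 2 - 2 * d 1 * d 3 + 2 * d 2 * d 4 + d 3 ^ 2 + 2 * d 3 * d 4 + d 4 ^ 2 +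
        d 5 ^ 2 := by
  simp only [quiver, Matrix.of_apply, Matrix.cons_val', Matrix.cons_val_fin_one,
    Fin.sum_univ_six, Matrix.cons_val_zero, Matrix.cons_val_one, Matrix.cons_val]
  ring

theorem sum_quiver_mul_eq_slack_sub {d : Fin 6 → ℝ} (hsum : ∑ i, d i = 1) :
    ∑ i, ∑ j, quiver i j * d i * d j = slack d - 1 / 2 := by
  rw [Fin.sum_univ_six] at hsum
  rw [sum_quiver_mul_eq, slack]
  linear_combination (-(1 / 2) * (1 + d 1 + d 2 + d 3)) * hsum

theorem slack_nonneg {d : Fin 6 → ℝ} (hd : ∀ i, 0 ≤ d i) : 0 ≤ slack d := by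
  have := hd 0; have := hd 1; have := hd 2; have := hd 3; have := hd 4; have := hd 5
  unfold slack
  positivity

theorem eq_of_slack_eq_zero {d : Fin 6 → ℝ} (hd : ∀ i, 0 ≤ d i) (hsum : ∑ i, d i = 1)
    (h : slack d = 0) : d = ![0, 1 / 2, 1 / 2, 0, 0, 0] := by
  rw [Fin.sum_univ_six] at hsum
  have h0 := hd 0; have h1 := hd 1; have h2 := hd 2; have h3 := hd 3; have h4 := hd 4
  have h5 := hd 5
  have := sq_nonneg (d 1 - d 2 - d 3)
  have := sq_nonneg (d 3 + d 4)
  have := sq_nonneg (d 5)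
  have := mul_nonneg h2 h4
  have hprod : 0 ≤ (d 0 + d 4 + d 5) * (1 + d 1 + d 2 + d 3) := by positivity
  unfold slack at h
  have e5 : d 5 = 0 := pow_eq_zero_iff two_ne_zero |>.mp (by linarith)
  have e34 : d 3 + d 4 = 0 := pow_eq_zero_iff two_ne_zero |>.mp (by linarith)
  have e123 : d 1 - d 2 - d 3 = 0 := pow_eq_zero_iff two_ne_zero |>.mp (by linarith)
  have e045 : d 0 + d 4 + d 5 = 0 :=
    (mul_eq_zero.mp (by linarith : (d 0 + d 4 + d 5) * (1 + d 1 + d 2 + d 3) = 0)).resolve_right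
      (by linarith)
  funext i
  fin_cases i <;> simp only [Fin.isValue, Fin.zero_eta, Fin.mk_one, Fin.reduceFinMk,
    Matrix.cons_val_zero, Matrix.cons_val_one, Matrix.cons_val] <;> linarith

end FigureEight

open FigureEight in
/-- Minimization of the quadratic form of the figure-eight knot quiver over the standard
simplex: the minimum of `dᵀCd` over `{d ≥ 0, ∑ d_i = 1}` is `−1/2`, attained exactly at
`d = (0, 1/2, 1/2, 0, 0, 0)`. -/
theorem figure_eight_quiver_simplex_min
    (C : Matrix (Fin 6) (Fin 6) ℝ)
    (hC : C = !![0, 0, 0, 0, 0, 0;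
                 0, 0, -1, -1, 0, 0;
                 0, -1, 0, 0, 1, 0;
                 0, -1, 0, 1, 1, 0;
                 0, 0, 1, 1, 1, 0;
                 0, 0, 0, 0, 0, 1])
    (d0 : Fin 6 → ℝ) (hd0 : d0 = ![0, 1/2, 1/2, 0, 0, 0]) :
    (∀ d : Fin 6 → ℝ, (∀ i, 0 ≤ d i) → (∑ i, d i) = 1 →
        -(1/2) ≤ ∑ i, ∑ j, C i j * d i * d j) ∧
    ((∀ i, 0 ≤ d0 i) ∧ (∑ i, d0 i) = 1 ∧
        (∑ i, ∑ j, C i j * d0 i * d0 j) = -(1/2)) ∧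
    (∀ d : Fin 6 → ℝ, (∀ i, 0 ≤ d i) → (∑ i, d i) = 1 →
        (∑ i, ∑ j, C i j * d i * d j) = -(1/2) → d = d0) := by
  obtain rfl : C = quiver := hC
  subst hd0
  refine ⟨fun d hd hsum => ?_, ⟨fun i => ?_, ?_, ?_⟩, fun d hd hsum hmin => ?_⟩
  · linarith [sum_quiver_mul_eq_slack_sub hsum, slack_nonneg hd]
  · fin_cases i <;> norm_num
  · simp only [Fin.sum_univ_six, Matrix.cons_val_zero, Matrix.cons_val_one, Matrix.cons_val]
    norm_num
  · simp [sum_quiver_mul_eq, Matrix.cons_val]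
  · exact eq_of_slack_eq_zero hd hsum (by linarith [sum_quiver_mul_eq_slack_sub hsum])
end
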